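/- If G is a connected finite simple graph with independence number α(G) ≤ 3 and Δ(G) − δ(G) ≤ 1, then G has a spanning path (a Hamiltonian path). -/

import Mathlib

/-!
Take a longest path `x₁ … xₖ` and suppose some vertex lies off it. Maximality forbids outside
neighbours of `x₁` and `xₖ`, the edge `x₁xₖ` (rotate the resulting cycle), and outside neighbours
of two consecutive path vertices. As `{x₁, xₖ}` is independent and sees nothing outside, `α ≤ 3`
makes the outside `R` a clique. For an outside neighbour `z` of `a` with successor `b`, a Pósa
rotation gives `x₁ ≁ b`, so `α ≤ 3` on `{x₁, z, b, xₖ}` gives `b ~ xₖ`; this lets a path through `R`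
join `a` to any later path vertex with an outside neighbour. Hence, by connectivity, exactly one
path vertex `a` has neighbours in `R`.

If `a` is adjacent to all of `R`, then `deg a ≥ |R| + 2` while `deg z ≤ |R|` for `z ∈ R`.
Otherwise some `y ∈ R` misses `a`, so `Δ ≤ deg y + 1 ≤ |R|`. Splicing `R` onto either side of `a`
shows each side has at least `|R|` vertices, so at least `|R| + 1` path vertices are non-neighbours
of `a`. By `α ≤ 3` (together with `a` and `y`) they form a clique of size `> Δ`, which must then be
all of `G`, although it misses `y`.
-/

open List

namespace SimpleGraph

variable {V : Type*} {G : SimpleGraph V}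

@[simp]
theorem isChain_adj_reverse {l : List V} : l.reverse.IsChain G.Adj ↔ l.IsChain G.Adj := by
  rw [isChain_reverse]
  exact IsChain.iff fun _ _ ↦ G.adj_comm _ _

theorem Preconnected.exists_adj_of_mem_of_notMem (hG : G.Preconnected) {s : Set V} {u v : V}
    (hu : u ∈ s) (hv : v ∉ s) : ∃ x ∈ s, ∃ y ∉ s, G.Adj x y := by
  obtain ⟨p⟩ := hG u v
  obtain ⟨d, -, hd₁, hd₂⟩ := p.exists_boundary_dart s hu hv
  exact ⟨_, hd₁, _, hd₂, d.adj⟩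

theorem Connected.mem_of_isClique_of_maxDegree_lt [Fintype V] [DecidableEq V]
    [DecidableRel G.Adj] (hG : G.Connected) {s : Finset V} (hs : G.IsClique (s : Set V))
    (hcard : G.maxDegree < s.card) (v : V) : v ∈ s := by
  by_contra hv
  obtain ⟨u, hu⟩ : s.Nonempty := Finset.card_pos.1 (by omega)
  obtain ⟨x, hx, y, hy, hxy⟩ := hG.preconnected.exists_adj_of_mem_of_notMem (s := s) hu hv
  have hsub : s.erase x ⊆ G.neighborFinset x := fun w hw ↦ by
    rw [Finset.mem_erase] at hw
    exact (G.mem_neighborFinset x w).2 (hs hx hw.2 hw.1.symm)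
  have hN : s.erase x = G.neighborFinset x := by
    refine Finset.eq_of_subset_of_card_le hsub ?_
    rw [Finset.card_erase_of_mem hx, card_neighborFinset_eq_degree]
    have := G.degree_le_maxDegree x
    omega
  exact hy (Finset.mem_of_mem_erase (hN ▸ (G.mem_neighborFinset x y).2 hxy))

theorem length_le_card_filter_add_degree [Fintype V] [DecidableEq V] [DecidableRel G.Adj]
    {xs : List V} {a z : V} (hnd : xs.Nodup) (hz : z ∉ xs) (haz : G.Adj a z) :
    xs.length ≤ (xs.toFinset.filter fun u ↦ u ≠ a ∧ ¬G.Adj a u).card + G.degree a := by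
  set Q := xs.toFinset.filter fun u ↦ u ≠ a ∧ ¬G.Adj a u
  have hcover : xs.toFinset ⊆ Q ∪ insert a ((G.neighborFinset a).erase z) := by
    intro u hu
    by_cases hua : u = a
    · simp [hua]
    by_cases hau : G.Adj a u
    · simp only [Finset.mem_union, Finset.mem_insert, Finset.mem_erase, mem_neighborFinset]
      exact Or.inr (Or.inr ⟨fun huz ↦ hz (huz ▸ mem_toFinset.1 hu), hau⟩)
    · simp [Q, hu, hua, hau]
  have hza : z ∈ G.neighborFinset a := (mem_neighborFinset _ _ _).2 haz
  have hins := Finset.card_insert_le a ((G.neighborFinset a).erase z)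
  have hdeg := Finset.card_pos.2 ⟨z, hza⟩
  rw [Finset.card_erase_of_mem hza] at hins
  rw [card_neighborFinset_eq_degree] at hins hdeg
  calc xs.length = xs.toFinset.card := (toFinset_card_of_nodup hnd).symm
    _ ≤ (Q ∪ insert a ((G.neighborFinset a).erase z)).card := Finset.card_le_card hcover
    _ ≤ Q.card + (insert a ((G.neighborFinset a).erase z)).card := Finset.card_union_le _ _
    _ ≤ Q.card + G.degree a := by omega

theorem IsClique.exists_isChain_cons_append_singleton {S : Set V} {a b z w : V}
    (hS : G.IsClique S) (hz : z ∈ S) (hw : w ∈ S) (haz : G.Adj a z) (hwb : G.Adj w b) :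
    ∃ zs : List V, zs.Nodup ∧ zs ≠ [] ∧ (∀ u ∈ zs, u ∈ S) ∧ (a :: zs ++ [b]).IsChain G.Adj := by
  by_cases hzw : z = w
  · subst hzw
    exact ⟨[z], by simp, by simp, by simpa, by simp [haz, hwb]⟩
  · exact ⟨[z, w], by simp [hzw], by simp, by simp [hz, hw], by simp [haz, hS hz hw hzw, hwb]⟩

theorem IndepSetFree.adj_of_not_adj [DecidableEq V] (hα : G.IndepSetFree 4) {a b c d : V}
    (hnd : [a, b, c, d].Nodup) (hab : ¬G.Adj a b) (hac : ¬G.Adj a c) (had : ¬G.Adj a d)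
    (hbc : ¬G.Adj b c) (hbd : ¬G.Adj b d) : G.Adj c d := by
  by_contra hcd
  refine hα [a, b, c, d].toFinset ⟨?_, List.toFinset_card_of_nodup hnd⟩
  simp only [List.coe_toFinset, List.mem_cons, List.not_mem_nil, or_false]
  rintro x (rfl | rfl | rfl | rfl) y (rfl | rfl | rfl | rfl) hxy <;>
    simp_all [G.adj_comm]

/-- A longest path of `G`, as its list of vertices: rerouted paths are then plain concatenations. -/
structure IsLongestPathList (G : SimpleGraph V) (xs : List V) : Prop where
  isChain : xs.IsChain G.Adj
  nodup : xs.Nodup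
  length_le ⦃ys : List V⦄ : ys.IsChain G.Adj → ys.Nodup → ys.length ≤ xs.length

theorem exists_isLongestPathList [Finite V] (G : SimpleGraph V) :
    ∃ xs, G.IsLongestPathList xs := by
  have := Fintype.ofFinite V
  set S := length '' {l : List V | l.IsChain G.Adj ∧ l.Nodup}
  have hS : BddAbove S := ⟨Fintype.card V, by
    rintro _ ⟨l, ⟨-, hl⟩, rfl⟩
    exact hl.length_le_card⟩
  obtain ⟨xs, ⟨hc, hn⟩, hlen⟩ := Nat.sSup_mem (s := S) ⟨0, [], ⟨isChain_nil, nodup_nil⟩, rfl⟩ hS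
  exact ⟨xs, hc, hn, fun ys hc hn ↦ hlen ▸ le_csSup hS ⟨ys, ⟨hc, hn⟩, rfl⟩⟩

namespace IsLongestPathList

variable {xs ys zs : List V} {a z : V}

theorem reverse (h : G.IsLongestPathList xs) : G.IsLongestPathList xs.reverse where
  isChain := isChain_adj_reverse.2 h.isChain
  nodup := nodup_reverse.2 h.nodup
  length_le ys hc hn := by simpa using h.length_le hc hn

theorem not_isChain_of_perm_append (h : G.IsLongestPathList xs) (hp : ys.Perm (zs ++ xs))
    (hzs : zs.Nodup) (hne : zs ≠ []) (hout : ∀ z ∈ zs, z ∉ xs) : ¬ys.IsChain G.Adj := by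
  intro hc
  have hle := h.length_le hc (hp.nodup_iff.2 (nodup_append.2 ⟨hzs, h.nodup, fun z hz x hx ↦ ?_⟩))
  · have := length_pos_iff.2 hne
    rw [hp.length_eq, length_append] at hle
    omega
  · rintro rfl; exact hout z hz hx

theorem not_isChain_cons_of_perm (h : G.IsLongestPathList xs) (hz : z ∉ xs) (hza : G.Adj z a)
    (hp : (a :: ys).Perm xs) : ¬(a :: ys).IsChain G.Adj := fun hc ↦
  h.not_isChain_of_perm_append (zs := [z]) (hp.cons z) (nodup_singleton z) (cons_ne_nil _ _)
    (by simpa using hz) (isChain_cons_cons.2 ⟨hza, hc⟩)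

theorem not_adj_head (h : G.IsLongestPathList (a :: xs)) (hz : z ∉ a :: xs) : ¬G.Adj z a :=
  fun hza ↦ h.not_isChain_cons_of_perm hz hza (Perm.refl _) h.isChain

theorem not_adj_getLast (h : G.IsLongestPathList (xs ++ [a])) (hz : z ∉ xs ++ [a]) :
    ¬G.Adj z a := by
  have := h.reverse
  simp only [reverse_append, reverse_singleton, singleton_append] at this
  exact this.not_adj_head (by simpa [and_comm] using hz)

variable {x₁ xₖ b c w : V} {as bs ms l₁ l₂ : List V}

theorem exists_eq_cons_append_cons_append_singleton (h : G.IsLongestPathList xs) (ha : a ∈ xs)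
    (hz : z ∉ xs) (hza : G.Adj z a) : ∃ x₁ as bs xₖ, xs = x₁ :: as ++ a :: bs ++ [xₖ] := by
  obtain ⟨l₁, l₂, rfl⟩ := append_of_mem ha
  obtain _ | ⟨x₁, as⟩ := l₁
  · exact absurd hza (h.not_adj_head hz)
  obtain rfl | ⟨bs, xₖ, rfl⟩ := l₂.eq_nil_or_concat'
  · exact absurd hza (h.not_adj_getLast hz)
  exact ⟨x₁, as, bs, xₖ, by simp⟩

theorem not_adj_head_last (h : G.IsLongestPathList xs) (hxs : xs = x₁ :: as ++ a :: bs ++ [xₖ])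
    (hz : z ∉ xs) (hza : G.Adj z a) : ¬G.Adj x₁ xₖ := by
  classical
  subst hxs
  intro h1k
  -- the edge `xₖx₁` closes a cycle; opened at `a`, it is a longest path that `z` extends
  refine h.not_isChain_cons_of_perm hz hza (ys := bs ++ xₖ :: x₁ :: as) ?_ ?_
  · rw [perm_iff_count]; intro; simp only [count_append, count_cons, count_nil]; omega
  · have hbk : (a :: bs ++ [xₖ]).IsChain G.Adj := h.isChain.infix ⟨x₁ :: as, [], by simp⟩
    have h1a : (x₁ :: as).IsChain G.Adj := h.isChain.infix ⟨[], a :: bs ++ [xₖ], by simp⟩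
    exact isChain_split.2 ⟨hbk, isChain_cons_cons.2 ⟨h1k.symm, h1a⟩⟩

theorem isClique_compl (hα : G.IndepSetFree 4) (h : G.IsLongestPathList xs)
    (hxs : xs = x₁ :: as ++ a :: bs ++ [xₖ]) (hz : z ∉ xs) (hza : G.Adj z a) :
    G.IsClique {v | v ∉ xs} := by
  classical
  have h1k := h.not_adj_head_last hxs hz hza
  subst hxs
  intro u hu v hv huv
  refine hα.adj_of_not_adj ?_ h1k (fun h1u ↦ h.not_adj_head hu h1u.symm)
    (fun h1v ↦ h.not_adj_head hv h1v.symm) (fun hku ↦ h.not_adj_getLast hu hku.symm)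
    (fun hkv ↦ h.not_adj_getLast hv hkv.symm)
  have hnd : [x₁, xₖ].Nodup := h.nodup.sublist (by simp)
  simp at hnd hu hv ⊢
  tauto

theorem not_adj_next (h : G.IsLongestPathList xs) (hxs : xs = l₁ ++ a :: b :: l₂)
    (hO : G.IsClique {v | v ∉ xs}) (hz : z ∉ xs) (hw : w ∉ xs) (hza : G.Adj z a) :
    ¬G.Adj w b := by
  classical
  subst hxs
  intro hwb
  obtain ⟨zs, hnd, hne, hzs, hc⟩ := hO.exists_isChain_cons_append_singleton hz hw hza.symm hwb
  refine h.not_isChain_of_perm_append (ys := l₁ ++ a :: (zs ++ b :: l₂)) ?_ hnd hne hzs ?_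
  · rw [perm_iff_count]; intro; simp only [count_append, count_cons]; omega
  · have hb : (b :: l₂).IsChain G.Adj := h.isChain.infix ⟨l₁ ++ [a], [], by simp⟩
    exact isChain_split.2 ⟨h.isChain.infix ⟨[], b :: l₂, by simp⟩, isChain_split.2 ⟨hc, hb⟩⟩

theorem not_adj_head_next (h : G.IsLongestPathList xs) (hxs : xs = x₁ :: as ++ a :: b :: bs)
    (hz : z ∉ xs) (hza : G.Adj z a) : ¬G.Adj x₁ b := by
  classical
  subst hxs
  intro h1b
  -- Pósa rotation at `x₁b`
  refine h.not_isChain_cons_of_perm hz hza (ys := as.reverse ++ x₁ :: b :: bs) ?_ ?_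
  · rw [perm_iff_count]; intro; simp only [count_append, count_cons, count_reverse]; omega
  · have ha1 : (x₁ :: as ++ [a]).reverse.IsChain G.Adj :=
      isChain_adj_reverse.2 (h.isChain.infix ⟨[], b :: bs, by simp⟩)
    have hb : (b :: bs).IsChain G.Adj := h.isChain.infix ⟨x₁ :: as ++ [a], [], by simp⟩
    simp only [reverse_append, reverse_cons, reverse_nil, nil_append, singleton_append] at ha1
    exact isChain_split (l₁ := a :: as.reverse) |>.2 ⟨ha1, isChain_cons_cons.2 ⟨h1b, hb⟩⟩

theorem adj_next_last (hα : G.IndepSetFree 4) (h : G.IsLongestPathList xs)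
    (hxs : xs = x₁ :: as ++ a :: b :: ms ++ [xₖ]) (hO : G.IsClique {v | v ∉ xs}) (hz : z ∉ xs)
    (hza : G.Adj z a) : G.Adj b xₖ := by
  classical
  have h1k := h.not_adj_head_last (by simp [hxs] : xs = x₁ :: as ++ a :: (b :: ms) ++ [xₖ]) hz hza
  have h1b := h.not_adj_head_next (by simp [hxs] : xs = x₁ :: as ++ a :: b :: (ms ++ [xₖ])) hz hza
  have hzb := h.not_adj_next (by simp [hxs] : xs = (x₁ :: as) ++ a :: b :: (ms ++ [xₖ])) hO hz hz
    hza
  subst hxs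
  refine hα.adj_of_not_adj (a := x₁) (b := z) ?_ (fun h1z ↦ h.not_adj_head hz h1z.symm) h1b h1k
    hzb (h.not_adj_getLast hz)
  have hnd : [x₁, b, xₖ].Nodup := h.nodup.sublist (by simp)
  simp at hnd hz ⊢
  tauto

theorem not_adj_of_adj (hα : G.IndepSetFree 4) (h : G.IsLongestPathList xs)
    (hxs : xs = x₁ :: as ++ a :: ms ++ c :: bs ++ [xₖ]) (hO : G.IsClique {v | v ∉ xs})
    (hz : z ∉ xs) (hw : w ∉ xs) (hza : G.Adj z a) : ¬G.Adj w c := by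
  classical
  intro hwc
  obtain _ | ⟨b, ms⟩ := ms
  · exact h.not_adj_next (by simp [hxs] : xs = (x₁ :: as) ++ a :: c :: (bs ++ [xₖ])) hO hz hw hza
      hwc
  have hbk := h.adj_next_last hα
    (by simp [hxs] : xs = x₁ :: as ++ a :: b :: (ms ++ c :: bs) ++ [xₖ]) hO hz hza
  obtain ⟨zs, hnd, hne, hzs, hzc⟩ := hO.exists_isChain_cons_append_singleton hz hw hza.symm hwc
  subst hxs
  -- `x₁ ⋯ a`, through the outside to `c`, back to `b`, jump to `xₖ`, back to the successor of `c`
  refine h.not_isChain_of_perm_append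
    (ys := x₁ :: as ++ a :: (zs ++ c :: (ms.reverse ++ b :: xₖ :: bs.reverse))) ?_ hnd hne hzs ?_
  · rw [perm_iff_count]; intro
    simp only [count_append, count_cons, count_reverse, count_nil]; omega
  · have h1a : (x₁ :: as ++ [a]).IsChain G.Adj :=
      h.isChain.infix ⟨[], b :: ms ++ c :: bs ++ [xₖ], by simp⟩
    have hbc : (b :: ms ++ [c]).IsChain G.Adj :=
      h.isChain.infix ⟨x₁ :: as ++ [a], bs ++ [xₖ], by simp⟩
    have hk : (bs ++ [xₖ]).IsChain G.Adj :=
      h.isChain.infix ⟨x₁ :: as ++ a :: b :: ms ++ [c], [], by simp⟩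
    have hcb : (c :: ms.reverse ++ [b]).IsChain G.Adj := by simpa using isChain_adj_reverse.2 hbc
    have hk' : (xₖ :: bs.reverse).IsChain G.Adj := by simpa using isChain_adj_reverse.2 hk
    refine isChain_split (l₁ := x₁ :: as) |>.2 ⟨h1a, isChain_split (l₁ := a :: zs) |>.2 ⟨hzc, ?_⟩⟩
    exact isChain_split (l₁ := c :: ms.reverse) |>.2 ⟨hcb, isChain_cons_cons.2 ⟨hbk, hk'⟩⟩

theorem eq_of_adj (hα : G.IndepSetFree 4) (h : G.IsLongestPathList xs)
    (hxs : xs = x₁ :: as ++ a :: bs ++ [xₖ]) (hz : z ∉ xs) (hza : G.Adj z a) (hc : c ∈ xs)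
    (hw : w ∉ xs) (hwc : G.Adj w c) : c = a := by
  have hO := h.isClique_compl hα hxs hz hza
  subst hxs
  simp only [cons_append, append_assoc, mem_cons, mem_append, not_mem_nil, or_false] at hc
  rcases hc with rfl | hc | rfl | hc | rfl
  · exact absurd hwc (h.not_adj_head hw)
  · obtain ⟨as, ms, rfl⟩ := append_of_mem hc
    exact absurd hza (h.not_adj_of_adj hα (by simp : _ = x₁ :: as ++ c :: ms ++ a :: bs ++ [xₖ])
      hO hw hz hwc)
  · rfl
  · obtain ⟨ms, bs, rfl⟩ := append_of_mem hc
    exact absurd hwc (h.not_adj_of_adj hα (by simp : _ = x₁ :: as ++ a :: ms ++ c :: bs ++ [xₖ])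
      hO hz hw hza)
  · exact absurd hwc (h.not_adj_getLast hw)

section Counting

variable [Fintype V] [DecidableEq V]

theorem card_compl_le_length (h : G.IsLongestPathList xs) (hxs : xs = l₁ ++ a :: l₂)
    (hO : G.IsClique {v | v ∉ xs}) (hz : z ∉ xs) (hza : G.Adj z a) :
    xs.toFinsetᶜ.card ≤ l₁.length := by
  set rest := (xs.toFinsetᶜ.erase z).toList
  have hzO : z ∈ xs.toFinsetᶜ := by simpa using hz
  have hzr : (z :: rest).Nodup := nodup_cons.2 ⟨by simp [rest], Finset.nodup_toList _⟩
  have hrO : ∀ u ∈ z :: rest, u ∉ xs := by simp [rest, or_imp, hz]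
  have hsuf : (a :: l₂) <:+ xs := ⟨l₁, hxs.symm⟩
  have hc : ((a :: l₂).reverse ++ z :: rest).IsChain G.Adj := by
    refine IsChain.append (isChain_adj_reverse.2 (h.isChain.suffix hsuf)) ?_
      (by simpa using hza.symm)
    exact (hzr.pairwise_of_forall_ne fun u hu v hv huv ↦ hO (hrO u hu) (hrO v hv) huv).isChain
  have hnd : ((a :: l₂).reverse ++ z :: rest).Nodup := by
    refine nodup_append.2 ⟨nodup_reverse.2 (h.nodup.sublist hsuf.sublist), hzr, ?_⟩
    rintro u hu v hv rfl
    exact hrO u hv (hsuf.subset (mem_reverse.1 hu))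
  have hlen := h.length_le hc hnd
  have hrest : rest.length = xs.toFinsetᶜ.card - 1 := by simp [rest, Finset.card_erase_of_mem hzO]
  have := Finset.card_pos.2 ⟨z, hzO⟩
  simp only [hxs, length_append, length_reverse, length_cons] at hlen hrest ⊢
  omega

theorem two_mul_card_compl_add_one_le_length (h : G.IsLongestPathList xs) (hxs : xs = l₁ ++ a :: l₂)
    (hO : G.IsClique {v | v ∉ xs}) (hz : z ∉ xs) (hza : G.Adj z a) :
    2 * xs.toFinsetᶜ.card + 1 ≤ xs.length := by
  have h₁ := h.card_compl_le_length hxs hO hz hza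
  have h₂ := h.reverse.card_compl_le_length
    (by simp [hxs] : xs.reverse = l₂.reverse ++ a :: l₁.reverse) (by simpa using hO)
    (by simpa using hz) hza
  simp only [toFinset_reverse, length_reverse] at h₂
  simp only [hxs, length_append, length_cons] at h₁ h₂ ⊢
  omega

variable [DecidableRel G.Adj] {y : V}

theorem neighborFinset_subset_insert_erase (huniq : ∀ c ∈ xs, ∀ w ∉ xs, G.Adj w c → c = a)
    (hy : y ∉ xs) : G.neighborFinset y ⊆ insert a (xs.toFinsetᶜ.erase y) := by
  intro v hv
  rw [mem_neighborFinset] at hv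
  by_cases hvxs : v ∈ xs
  · simp [huniq v hvxs y hy hv]
  · simp [hvxs, hv.ne.symm]

theorem false_of_forall_adj (hdeg : G.maxDegree ≤ G.minDegree + 1) (h : G.IsLongestPathList xs)
    (hxs : xs = l₁ ++ a :: l₂) (hz : z ∉ xs) (hza : G.Adj z a)
    (huniq : ∀ c ∈ xs, ∀ w ∉ xs, G.Adj w c → c = a) (hall : ∀ y ∉ xs, G.Adj a y) : False := by
  have hzO : z ∈ xs.toFinsetᶜ := by simpa using hz
  have hdegz : G.degree z ≤ xs.toFinsetᶜ.card := by
    have := Finset.card_le_card (neighborFinset_subset_insert_erase huniq hz)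
    have := Finset.card_insert_le a (xs.toFinsetᶜ.erase z)
    rw [Finset.card_erase_of_mem hzO] at this
    have := Finset.card_pos.2 ⟨z, hzO⟩
    rw [← card_neighborFinset_eq_degree]
    omega
  subst hxs
  obtain ⟨l₁, p, rfl⟩ := l₁.eq_nil_or_concat'.resolve_left
    (by rintro rfl; exact h.not_adj_head hz hza)
  obtain ⟨q, l₂, rfl⟩ := l₂.exists_cons_of_ne_nil
    (by rintro rfl; exact h.not_adj_getLast (by simpa using hz) hza)
  have hpaq : [p, a, q].IsChain G.Adj := h.isChain.infix ⟨l₁, l₂, by simp⟩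
  have hnd : [p, a, q].Nodup := h.nodup.sublist (by simp)
  have hpq : p ∉ insert q (l₁ ++ [p] ++ a :: q :: l₂).toFinsetᶜ := by simp_all
  have hqO : q ∉ (l₁ ++ [p] ++ a :: q :: l₂).toFinsetᶜ := by simp
  have hNa : insert p (insert q (l₁ ++ [p] ++ a :: q :: l₂).toFinsetᶜ) ⊆ G.neighborFinset a := by
    intro v hv
    simp only [Finset.mem_insert] at hv
    rw [mem_neighborFinset]
    rcases hv with rfl | rfl | hv
    · exact (isChain_cons_cons.1 hpaq).1.symm
    · exact isChain_pair.1 hpaq.tail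
    · exact hall v (by simp at hv ⊢; tauto)
  have hdega := Finset.card_le_card hNa
  rw [Finset.card_insert_of_notMem hpq, Finset.card_insert_of_notMem hqO] at hdega
  have := G.degree_le_maxDegree a
  have := G.minDegree_le_degree z
  rw [card_neighborFinset_eq_degree] at hdega
  omega

theorem false_of_not_adj (hG : G.Connected) (hα : G.IndepSetFree 4)
    (hdeg : G.maxDegree ≤ G.minDegree + 1) (h : G.IsLongestPathList xs) (hxs : xs = l₁ ++ a :: l₂)
    (hO : G.IsClique {v | v ∉ xs}) (hz : z ∉ xs) (hza : G.Adj z a)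
    (huniq : ∀ c ∈ xs, ∀ w ∉ xs, G.Adj w c → c = a) (hy : y ∉ xs) (hay : ¬G.Adj a y) : False := by
  have hyO : y ∈ xs.toFinsetᶜ := by simpa using hy
  have hmax : G.maxDegree ≤ xs.toFinsetᶜ.card := by
    have hsub : G.neighborFinset y ⊆ xs.toFinsetᶜ.erase y :=
      (Finset.subset_insert_iff_of_notMem (by simpa [G.adj_comm] using hay)).1
        (neighborFinset_subset_insert_erase huniq hy)
    have := Finset.card_le_card hsub
    rw [Finset.card_erase_of_mem hyO, card_neighborFinset_eq_degree] at this
    have := Finset.card_pos.2 ⟨y, hyO⟩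
    have := G.minDegree_le_degree y
    omega
  set Q := xs.toFinset.filter fun u ↦ u ≠ a ∧ ¬G.Adj a u
  have hQ : G.IsClique (Q : Set V) := by
    intro u hu v hv huv
    simp only [Q, Finset.coe_filter, mem_toFinset] at hu hv
    refine hα.adj_of_not_adj (a := a) (b := y) ?_ hay hu.2.2 hv.2.2
      (fun hyu ↦ hu.2.1 (huniq u hu.1 y hy hyu)) (fun hyv ↦ hv.2.1 (huniq v hv.1 y hy hyv))
    have hya : a ≠ y := fun e ↦ hy (e ▸ by simp [hxs])
    have hyu : y ≠ u := fun e ↦ hy (e ▸ hu.1)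
    have hyv : y ≠ v := fun e ↦ hy (e ▸ hv.1)
    simp [hya, hyu, hyv, huv, hu.2.1.symm, hv.2.1.symm]
  have hcard : xs.length ≤ Q.card + xs.toFinsetᶜ.card :=
    (length_le_card_filter_add_degree h.nodup hz hza.symm).trans
      (by gcongr; exact (G.degree_le_maxDegree a).trans hmax)
  have hlen := h.two_mul_card_compl_add_one_le_length hxs hO hz hza
  have hyQ := hG.mem_of_isClique_of_maxDegree_lt hQ (by omega) y
  exact hy (mem_toFinset.1 (Finset.mem_filter.1 hyQ).1)

theorem mem (hG : G.Connected) (hα : G.IndepSetFree 4)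
    (hdeg : G.maxDegree ≤ G.minDegree + 1) (h : G.IsLongestPathList xs) (v : V) : v ∈ xs := by
  by_contra hv
  obtain ⟨u, hu⟩ := exists_mem_of_length_pos
    (h.length_le (isChain_singleton v) (nodup_singleton v))
  obtain ⟨a, ha, z, hz, haz⟩ :=
    hG.preconnected.exists_adj_of_mem_of_notMem (s := {x | x ∈ xs}) hu hv
  obtain ⟨x₁, as, bs, xₖ, hxs⟩ := h.exists_eq_cons_append_cons_append_singleton ha hz haz.symm
  have hO := h.isClique_compl hα hxs hz haz.symm
  have huniq : ∀ c ∈ xs, ∀ w ∉ xs, G.Adj w c → c = a := fun c hc w hw hwc ↦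
    h.eq_of_adj hα hxs hz haz.symm hc hw hwc
  have hxs' : xs = (x₁ :: as) ++ a :: (bs ++ [xₖ]) := by simp [hxs]
  by_cases hall : ∀ y ∉ xs, G.Adj a y
  · exact h.false_of_forall_adj hdeg hxs' hz haz.symm huniq hall
  · push Not at hall
    obtain ⟨y, hy, hay⟩ := hall
    exact h.false_of_not_adj hG hα hdeg hxs' hO hz haz.symm huniq hy hay

end Counting

end IsLongestPathList

theorem exists_isHamiltonian_of_isChain [DecidableEq V] {xs : List V} (hne : xs ≠ [])
    (hc : xs.IsChain G.Adj) (hnd : xs.Nodup) (hmem : ∀ v, v ∈ xs) :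
    ∃ (u v : V) (p : G.Walk u v), p.IsHamiltonian :=
  ⟨_, _, Walk.ofSupport xs hne hc, fun v ↦ by
    rw [Walk.support_ofSupport]; exact count_eq_one_of_mem hnd (hmem v)⟩

end SimpleGraph

open SimpleGraph

/-- If `G` is connected with independence number at most `3` and
`Δ(G) - δ(G) ≤ 1`, then `G` has a spanning (Hamiltonian) path. -/
theorem hamiltonian_path_of_alpha_le_three_near_regular
    {V : Type} [Fintype V] [DecidableEq V] (G : SimpleGraph V) [DecidableRel G.Adj]
    (hconn : G.Connected)
    (hα : ∀ s : Finset V, (∀ a ∈ s, ∀ b ∈ s, a ≠ b → ¬ G.Adj a b) → s.card ≤ 3)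
    (hdeg : G.maxDegree - G.minDegree ≤ 1) :
    ∃ (u v : V) (p : G.Walk u v), p.IsHamiltonian := by
  have hfree : G.IndepSetFree 4 := fun s hs ↦ by
    have := hα s fun a ha b hb hab ↦ hs.isIndepSet ha hb hab
    have := hs.card_eq
    omega
  obtain ⟨xs, hxs⟩ := G.exists_isLongestPathList
  have hmem := hxs.mem hconn hfree (by omega)
  obtain ⟨v⟩ := hconn.nonempty
  exact exists_isHamiltonian_of_isChain (ne_nil_of_mem (hmem v)) hxs.isChain hxs.nodup hmem
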